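/- Let n ≥ 1, R > 0, λ > 0, A ≥ λ, and B ≥ A(4R²(n+1) + 1). Define v(r) = A(R² − r²)² and z(r,t) = −log(v(r) + B(T − t)) for 0 ≤ r ≤ R, 0 < t < T. Then z satisfies the supersolution inequality z_t − z_{rr} − ((n−1)/r) z_r − λ e^{z} ≥ 0 for all 0 < r < R and 0 < t < T. -/

import Mathlib

/-!
Write `w = v(r) + B(T - t) > 0`, so that `z = -log w`, `z_t = B / w`, `z_r = -v'/w` and
`z_rr = (v'² - w v'') / w²`. The defect `z_t - z_rr - ((n-1)/r) z_r - λ e^z` is then `N / w²` with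
`N = (B - λ + v'' + (n-1) v'/r) w - v'²`. For `v = A(R² - r²)²` one has `v'² = 16 A r² v ≤ 16 A r² w`,
which gives `N ≥ (B - λ - 4AR² - 4Ar² - 4A(n-1)(R² - r²)) w ≥ (B - λ - 4A(n+1)R²) w ≥ (A - λ) w ≥ 0`.
-/

open Real

lemma HasDerivAt.neg_log {f : ℝ → ℝ} {f' x : ℝ} (hf : HasDerivAt f f' x) (hx : f x ≠ 0) :
    HasDerivAt (fun y => -Real.log (f y)) (-f' / f x) x :=
  (hf.log hx).neg.congr_deriv (neg_div _ _).symm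

lemma deriv_deriv_neg_log {f f' : ℝ → ℝ} {f'' r : ℝ} (hf : ∀ s, HasDerivAt f (f' s) s)
    (hf' : HasDerivAt f' f'' r) (hne : ∀ s, f s ≠ 0) :
    deriv (deriv fun s => -log (f s)) r = (f' r ^ 2 - f r * f'') / f r ^ 2 := by
  have hderiv : deriv (fun s => -log (f s)) = fun s => -f' s / f s :=
    funext fun s => ((hf s).neg_log (hne s)).deriv
  rw [hderiv]
  exact (hf'.neg.div (hf r) (hne r)).deriv.trans (by simp only [Pi.neg_apply]; field_simp; ring)

section Bump

variable (A R : ℝ)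

lemma hasDerivAt_bump (s : ℝ) :
    HasDerivAt (fun s => A * (R ^ 2 - s ^ 2) ^ 2) (-(4 * A * s * (R ^ 2 - s ^ 2))) s :=
  (((hasDerivAt_pow 2 s).const_sub (R ^ 2)).pow 2).const_mul A
    |>.congr_deriv (by push_cast; ring)

lemma hasDerivAt_bump_deriv (s : ℝ) :
    HasDerivAt (fun s => -(4 * A * s * (R ^ 2 - s ^ 2))) (-(4 * A * (R ^ 2 - 3 * s ^ 2))) s := by
  rw [show (fun s => -(4 * A * s * (R ^ 2 - s ^ 2))) = fun s => -(4 * A) * (R ^ 2 * s - s ^ 3) from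
    funext fun s => by ring]
  exact (((hasDerivAt_id' s).const_mul _).sub (hasDerivAt_pow 3 s)).const_mul _
    |>.congr_deriv (by push_cast; ring)

end Bump

lemma bump_supersolution_defect_nonneg {n r R lam A B K w : ℝ} (hn : 1 ≤ n) (hr : r ≠ 0)
    (hrR : r ^ 2 ≤ R ^ 2) (hA0 : 0 ≤ A) (hA : lam ≤ A) (hB : A * (4 * R ^ 2 * (n + 1) + 1) ≤ B)
    (hK : 0 < K) (hw : w = A * (R ^ 2 - r ^ 2) ^ 2 + K) :
    0 ≤ B / w - ((4 * A * r * (R ^ 2 - r ^ 2)) ^ 2 - w * (-(4 * A * (R ^ 2 - 3 * r ^ 2)))) / w ^ 2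
      - ((n - 1) / r) * (4 * A * r * (R ^ 2 - r ^ 2) / w) - lam * w⁻¹ := by
  have hw0 : 0 < w := hw ▸ by positivity
  have hcoef : 0 ≤ B - lam - 4 * A * R ^ 2 - 4 * A * r ^ 2 - 4 * A * (n - 1) * (R ^ 2 - r ^ 2) := by
    nlinarith [mul_nonneg hA0 (sub_nonneg.2 hrR), mul_nonneg (mul_nonneg hA0 (sub_nonneg.2 hn)) (sq_nonneg r)]
  have hsq : (4 * A * r * (R ^ 2 - r ^ 2)) ^ 2 = 16 * A * r ^ 2 * (w - K) := by rw [hw]; ring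
  have hdefect : B / w - (16 * A * r ^ 2 * (w - K) - w * (-(4 * A * (R ^ 2 - 3 * r ^ 2)))) / w ^ 2
      - ((n - 1) / r) * (4 * A * r * (R ^ 2 - r ^ 2) / w) - lam * w⁻¹
      = ((B - lam - 4 * A * R ^ 2 - 4 * A * r ^ 2 - 4 * A * (n - 1) * (R ^ 2 - r ^ 2)) * w
          + 16 * A * r ^ 2 * K) / w ^ 2 := by
    field_simp
    ring
  rw [hsq, hdefect]
  positivity

theorem stmt_5_general (n : ℕ) (hn : 1 ≤ n) (R T lam A B : ℝ)
    (hlam : 0 < lam) (hA : lam ≤ A)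
    (hB : A * (4 * R ^ 2 * ((n : ℝ) + 1) + 1) ≤ B)
    (v : ℝ → ℝ) (hv : ∀ r, v r = A * (R ^ 2 - r ^ 2) ^ 2)
    (z : ℝ → ℝ → ℝ) (hz : ∀ r t, z r t = -Real.log (v r + B * (T - t))) :
    ∀ r t : ℝ, 0 < r → r < R → 0 < t → t < T →
      0 ≤ deriv (fun τ => z r τ) t - deriv (deriv (fun s => z s t)) r
          - (((n : ℝ) - 1) / r) * deriv (fun s => z s t) r
          - lam * Real.exp (z r t) := by
  intro r t hr hrR _ htT
  have hA0 : 0 < A := hlam.trans_le hA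
  have hB0 : 0 < B := (by positivity : 0 < A * (4 * R ^ 2 * ((n : ℝ) + 1) + 1)).trans_le hB
  set K := B * (T - t)
  have hK : 0 < K := mul_pos hB0 (sub_pos.2 htT)
  have hne : ∀ s, A * (R ^ 2 - s ^ 2) ^ 2 + K ≠ 0 :=
    fun s => (add_pos_of_nonneg_of_pos (by positivity) hK).ne'
  have hzτ : (fun τ => z r τ) = fun τ => -log (A * (R ^ 2 - r ^ 2) ^ 2 + B * (T - τ)) :=
    funext fun τ => by rw [hz, hv]
  have hzs : (fun s => z s t) = fun s => -log (A * (R ^ 2 - s ^ 2) ^ 2 + K) :=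
    funext fun s => by rw [hz, hv]
  have hzt : HasDerivAt (fun τ => z r τ) (B / (A * (R ^ 2 - r ^ 2) ^ 2 + K)) t := by
    rw [hzτ]
    exact ((((hasDerivAt_id' t).const_sub T).const_mul B).const_add _).neg_log (hne r)
      |>.congr_deriv (by ring)
  rw [hzt.deriv, hzs, deriv_deriv_neg_log (fun s => (hasDerivAt_bump A R s).add_const K)
    (hasDerivAt_bump_deriv A R r) hne, (((hasDerivAt_bump A R r).add_const K).neg_log (hne r) |>.deriv),
    hz, hv, exp_neg, exp_log (by positivity)]
  simpa only [neg_neg, neg_sq] using bump_supersolution_defect_nonneg (by exact_mod_cast hn) hr.ne'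
    (pow_le_pow_left₀ hr.le hrR.le 2) hA0.le hA hB hK rfl

theorem stmt_5 (n : ℕ) (hn : 1 ≤ n) (R T lam A B : ℝ)
    (hR : 0 < R) (hT : 0 < T) (hlam : 0 < lam) (hA : lam ≤ A)
    (hB : A * (4 * R ^ 2 * ((n : ℝ) + 1) + 1) ≤ B)
    (v : ℝ → ℝ) (hv : ∀ r, v r = A * (R ^ 2 - r ^ 2) ^ 2)
    (z : ℝ → ℝ → ℝ) (hz : ∀ r t, z r t = -Real.log (v r + B * (T - t))) :
    ∀ r t : ℝ, 0 < r → r < R → 0 < t → t < T →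
      0 ≤ deriv (fun τ => z r τ) t - deriv (deriv (fun s => z s t)) r
          - (((n : ℝ) - 1) / r) * deriv (fun s => z s t) r
          - lam * Real.exp (z r t) :=
  stmt_5_general n hn R T lam A B hlam hA hB v hv z hz
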